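/- arXiv:2012.00303 — 2 statements merged into one kernel-verified Lean document; each statement's English description precedes it below -/
import Mathlib

section
/- Let D be a chord diagram and let D' be obtained from D by a strong third move whose three distinguished chords pairwise cross in D. Then tr(D') ≤ tr(D) ≤ tr(D') + 2. (The inequality proved in Theorem 1(3): a strong third move changes the trivializing number by at most 2, and never increases it in this direction.) -/
open scoped Classical

/-- Two chords of a chord diagram on the points `0 < 1 < ⋯ < N-1` (in this cyclic
order) cross if their endpoints interleave. -/
def Crosses {N : ℕ} (c d : Sym2 (Fin N)) : Prop :=
  ∃ a b x y : Fin N, a < x ∧ x < b ∧ b < y ∧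
    ((c = s(a, b) ∧ d = s(x, y)) ∨ (c = s(x, y) ∧ d = s(a, b)))

/-- A chord diagram of order `n`: a partition of the `2n` points `0, 1, …, 2n-1`
(in this cyclic order on a circle) into `n` unordered pairs, the chords. -/
structure ChordDiagram (n : ℕ) where
  chords : Finset (Sym2 (Fin (2 * n)))
  not_diag : ∀ c ∈ chords, ¬ c.IsDiag
  cover : ∀ x : Fin (2 * n), ∃! c, c ∈ chords ∧ x ∈ c

/-- The trivializing number: the minimum number of chords whose deletion yields a
trivial chord diagram (one with no two crossing chords). -/
noncomputable def tr {n : ℕ} (D : ChordDiagram n) : ℕ :=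
  sInf {k | ∃ S ⊆ D.chords, S.card = k ∧
    ∀ c ∈ D.chords \ S, ∀ d ∈ D.chords \ S, ¬ Crosses c d}

/-- The cross chord number: the number of unordered pairs of chords that cross. -/
noncomputable def Xnum {n : ℕ} (D : ChordDiagram n) : ℕ :=
  ((D.chords ×ˢ D.chords).filter fun p => Crosses p.1 p.2).card / 2

/-- Two points are cyclically adjacent on the circle `0, 1, …, N-1`. -/
def Adjacent {N : ℕ} (p q : Fin N) : Prop :=
  (p.val + 1) % N = q.val ∨ (q.val + 1) % N = p.val

/-- The ternary cyclic-order relation on the points `0, 1, …, N-1`. -/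
def CyclicBtw {N : ℕ} (a b c : Fin N) : Prop :=
  (a < b ∧ b < c) ∨ (b < c ∧ c < a) ∨ (c < a ∧ a < b)

/-- A first move (first flat Reidemeister move): `D'` is obtained from `D` by
adding an isolated chord. -/
def FirstMove {n : ℕ} (D : ChordDiagram n) (D' : ChordDiagram (n + 1)) : Prop :=
  ∃ ι : Fin (2 * n) → Fin (2 * (n + 1)),
    Function.Injective ι ∧
    (∀ a b c, CyclicBtw a b c → CyclicBtw (ι a) (ι b) (ι c)) ∧
    (∀ ch ∈ D.chords, ch.map ι ∈ D'.chords) ∧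
    ∃ p q : Fin (2 * (n + 1)), Adjacent p q ∧ s(p, q) ∈ D'.chords ∧
      ∀ x, x ∉ Set.range ι ↔ (x = p ∨ x = q)

/-- A triple move with distinguished pairs `A = {a₁, a₂}`, `B = {b₁, b₂}`,
`C = {c₁, c₂}` of cyclically adjacent points and distinguished chords
`s(a₁, b₁)`, `s(a₂, c₁)`, `s(b₂, c₂)`: `D'` is obtained from `D` by transposing
the two points of each of `A`, `B`, `C`. -/
def TripleMoveAt {n : ℕ} (D D' : ChordDiagram n)
    (a₁ a₂ b₁ b₂ c₁ c₂ : Fin (2 * n)) : Prop :=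
  Adjacent a₁ a₂ ∧ Adjacent b₁ b₂ ∧ Adjacent c₁ c₂ ∧
  ([a₁, a₂, b₁, b₂, c₁, c₂].Pairwise (· ≠ ·)) ∧
  s(a₁, b₁) ∈ D.chords ∧ s(a₂, c₁) ∈ D.chords ∧ s(b₂, c₂) ∈ D.chords ∧
  D'.chords = D.chords.image
    (Sym2.map (Equiv.swap a₁ a₂ * Equiv.swap b₁ b₂ * Equiv.swap c₁ c₂))

/-- Three chords pairwise cross. -/
def PairwiseCross {N : ℕ} (x y z : Sym2 (Fin N)) : Prop :=
  Crosses x y ∧ Crosses x z ∧ Crosses y z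

/-- Exactly one of the three pairs among three chords crosses. -/
def ExactlyOneCross {N : ℕ} (x y z : Sym2 (Fin N)) : Prop :=
  (Crosses x y ∧ ¬ Crosses x z ∧ ¬ Crosses y z) ∨
  (¬ Crosses x y ∧ Crosses x z ∧ ¬ Crosses y z) ∨
  (¬ Crosses x y ∧ ¬ Crosses x z ∧ Crosses y z)

/-- A strong third move: a triple move whose three distinguished chords pairwise
cross in `D`, or whose three replacement chords pairwise cross in `D'`. -/
def StrongThirdMove {n : ℕ} (D D' : ChordDiagram n) : Prop :=
  ∃ a₁ a₂ b₁ b₂ c₁ c₂, TripleMoveAt D D' a₁ a₂ b₁ b₂ c₁ c₂ ∧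
    (PairwiseCross s(a₁, b₁) s(a₂, c₁) s(b₂, c₂) ∨
     PairwiseCross s(a₂, b₂) s(a₁, c₂) s(b₁, c₁))

/-- A weak third move: a triple move such that exactly one pair of the three
distinguished chords crosses in `D`, or exactly one pair of the three
replacement chords crosses in `D'`. -/
def WeakThirdMove {n : ℕ} (D D' : ChordDiagram n) : Prop :=
  ∃ a₁ a₂ b₁ b₂ c₁ c₂, TripleMoveAt D D' a₁ a₂ b₁ b₂ c₁ c₂ ∧
    (ExactlyOneCross s(a₁, b₁) s(a₂, c₁) s(b₂, c₂) ∨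
     ExactlyOneCross s(a₂, b₂) s(a₁, c₂) s(b₁, c₁))


section CrossAux
variable {N : ℕ}

def BtwP (a b t : Fin N) : Prop := (a < t ∧ t < b) ∨ (b < t ∧ t < a)

lemma btw_comm (a b t : Fin N) : BtwP a b t ↔ BtwP b a t := or_comm

lemma crosses_comm {c d : Sym2 (Fin N)} : Crosses c d ↔ Crosses d c := by
  unfold Crosses
  constructor <;> rintro ⟨p, q, r, s, h1, h2, h3, h4⟩ <;>
    exact ⟨p, q, r, s, h1, h2, h3, h4.symm.imp (fun h => ⟨h.2, h.1⟩) (fun h => ⟨h.2, h.1⟩)⟩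

lemma crosses_irrefl (c : Sym2 (Fin N)) : ¬ Crosses c c := by
  rintro ⟨p, q, r, s, h1, h2, h3, (⟨hc, hd⟩ | ⟨hc, hd⟩)⟩ <;>
  · rw [hc, Sym2.eq_iff] at hd
    rcases hd with ⟨rfl, rfl⟩ | ⟨rfl, rfl⟩ <;>
      simp only [Fin.lt_def] at h1 h2 h3 <;> omega

lemma crosses_iff_aux {a b x y : Fin N} (hab : a < b) (hxy : x < y) (hax : a < x)
    (hbx : b ≠ x) (hby : b ≠ y) :
    Crosses s(a, b) s(x, y) ↔ (BtwP a b x ↔ ¬ BtwP a b y) := by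
  constructor
  · rintro ⟨p, q, r, s, h1, h2, h3, (⟨hc, hd⟩ | ⟨hc, hd⟩)⟩ <;>
      rw [Sym2.eq_iff] at hc hd <;>
      rcases hc with ⟨rfl, rfl⟩ | ⟨rfl, rfl⟩ <;>
      rcases hd with ⟨rfl, rfl⟩ | ⟨rfl, rfl⟩ <;>
      · simp only [BtwP, Fin.lt_def] at *
        omega
  · intro h
    have hbx' : b.val ≠ x.val := fun hh => hbx (Fin.val_injective hh)
    have hby' : b.val ≠ y.val := fun hh => hby (Fin.val_injective hh)
    have key : x.val < b.val ∧ b.val < y.val := by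
      simp only [BtwP, Fin.lt_def] at h
      simp only [Fin.lt_def] at hab hxy hax
      omega
    exact ⟨a, b, x, y, hax, Fin.lt_def.mpr key.1, Fin.lt_def.mpr key.2,
      Or.inl ⟨rfl, rfl⟩⟩

lemma btw_pairs {a b x y : Fin N} (hab : a ≠ b) (hxy : x ≠ y) (hax : a ≠ x)
    (hay : a ≠ y) (hbx : b ≠ x) (hby : b ≠ y) :
    ((BtwP a b x ↔ ¬ BtwP a b y) ↔ (BtwP x y a ↔ ¬ BtwP x y b)) := by
  have h1 : a.val ≠ b.val := fun hh => hab (Fin.val_injective hh)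
  have h2 : x.val ≠ y.val := fun hh => hxy (Fin.val_injective hh)
  have h3 : a.val ≠ x.val := fun hh => hax (Fin.val_injective hh)
  have h4 : a.val ≠ y.val := fun hh => hay (Fin.val_injective hh)
  have h5 : b.val ≠ x.val := fun hh => hbx (Fin.val_injective hh)
  have h6 : b.val ≠ y.val := fun hh => hby (Fin.val_injective hh)
  simp only [BtwP, Fin.lt_def]
  omega

lemma crosses_iff_sorted {a b x y : Fin N} (hab : a < b) (hxy : x < y)
    (hax : a ≠ x) (hay : a ≠ y) (hbx : b ≠ x) (hby : b ≠ y) :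
    Crosses s(a, b) s(x, y) ↔ (BtwP a b x ↔ ¬ BtwP a b y) := by
  rcases hax.lt_or_gt with h | h
  · exact crosses_iff_aux hab hxy h hbx hby
  · rw [crosses_comm, crosses_iff_aux hxy hab h hay.symm hby.symm]
    exact (btw_pairs hab.ne hxy.ne hax hay hbx hby).symm

lemma crosses_iff {a b x y : Fin N} (hab : a ≠ b) (hxy : x ≠ y) (hax : a ≠ x)
    (hay : a ≠ y) (hbx : b ≠ x) (hby : b ≠ y) :
    Crosses s(a, b) s(x, y) ↔ (BtwP a b x ↔ ¬ BtwP a b y) := by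
  rcases hab.lt_or_gt with h1 | h1 <;> rcases hxy.lt_or_gt with h2 | h2
  · exact crosses_iff_sorted h1 h2 hax hay hbx hby
  · rw [show s(x, y) = s(y, x) from Sym2.eq_swap,
      crosses_iff_sorted h1 h2 hay hax hby hbx]
    exact iff_not_comm
  · rw [show s(a, b) = s(b, a) from Sym2.eq_swap,
      crosses_iff_sorted h1 h2 hbx hby hax hay, btw_comm b a x, btw_comm b a y]
  · rw [show s(a, b) = s(b, a) from Sym2.eq_swap,
      show s(x, y) = s(y, x) from Sym2.eq_swap,
      crosses_iff_sorted h1 h2 hby hbx hay hax, btw_comm b a y, btw_comm b a x]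
    exact iff_not_comm

lemma corner {p p' q x y : Fin N} (hadj : Adjacent p p')
    (hpq : p ≠ q) (hp'q : p' ≠ q) (hxy : x ≠ y)
    (hxp : x ≠ p) (hxp' : x ≠ p') (hxq : x ≠ q)
    (hyp : y ≠ p) (hyp' : y ≠ p') (hyq : y ≠ q) :
    Crosses s(p, q) s(x, y) ↔ Crosses s(p', q) s(x, y) := by
  rw [crosses_iff hpq hxy hxp.symm hyp.symm hxq.symm hyq.symm,
      crosses_iff hp'q hxy hxp'.symm hyp'.symm hxq.symm hyq.symm]
  have key : p'.val = p.val + 1 ∨ p.val = p'.val + 1 ∨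
      (p.val + 1 = N ∧ p'.val = 0) ∨ (p'.val + 1 = N ∧ p.val = 0) := by
    rcases hadj with h | h
    · rcases lt_or_ge (p.val + 1) N with h2 | h2
      · left; rw [Nat.mod_eq_of_lt h2] at h; omega
      · have hN : p.val + 1 = N := le_antisymm (Nat.succ_le_of_lt p.isLt) h2
        right; right; left
        refine ⟨hN, ?_⟩
        rw [← h, hN, Nat.mod_self]
    · rcases lt_or_ge (p'.val + 1) N with h2 | h2
      · right; left; rw [Nat.mod_eq_of_lt h2] at h; omega
      · have hN : p'.val + 1 = N := le_antisymm (Nat.succ_le_of_lt p'.isLt) h2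
        right; right; right
        refine ⟨hN, ?_⟩
        rw [← h, hN, Nat.mod_self]
  have e1 : p.val ≠ q.val := fun hh => hpq (Fin.val_injective hh)
  have e2 : p'.val ≠ q.val := fun hh => hp'q (Fin.val_injective hh)
  have e3 : x.val ≠ p.val := fun hh => hxp (Fin.val_injective hh)
  have e4 : x.val ≠ p'.val := fun hh => hxp' (Fin.val_injective hh)
  have e5 : x.val ≠ q.val := fun hh => hxq (Fin.val_injective hh)
  have e6 : y.val ≠ p.val := fun hh => hyp (Fin.val_injective hh)
  have e7 : y.val ≠ p'.val := fun hh => hyp' (Fin.val_injective hh)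
  have e8 : y.val ≠ q.val := fun hh => hyq (Fin.val_injective hh)
  have l1 := p.isLt; have l2 := p'.isLt; have l3 := q.isLt
  have l4 := x.isLt; have l5 := y.isLt
  simp only [BtwP, Fin.lt_def]
  omega

end CrossAux

section Diagram
variable {n : ℕ}

lemma adjacent_symm {N : ℕ} {p q : Fin N} (h : Adjacent p q) : Adjacent q p :=
  h.symm

lemma tr_le (D : ChordDiagram n) {S : Finset (Sym2 (Fin (2 * n)))}
    (hsub : S ⊆ D.chords)
    (htriv : ∀ c ∈ D.chords \ S, ∀ d ∈ D.chords \ S, ¬ Crosses c d) :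
    tr D ≤ S.card :=
  Nat.sInf_le ⟨S, hsub, rfl, htriv⟩

lemma tr_spec (D : ChordDiagram n) : ∃ S ⊆ D.chords, S.card = tr D ∧
    ∀ c ∈ D.chords \ S, ∀ d ∈ D.chords \ S, ¬ Crosses c d := by
  have hne : {k | ∃ S ⊆ D.chords, S.card = k ∧
      ∀ c ∈ D.chords \ S, ∀ d ∈ D.chords \ S, ¬ Crosses c d}.Nonempty :=
    ⟨D.chords.card, D.chords, subset_rfl, rfl, by simp⟩
  obtain ⟨S, h1, h2, h3⟩ := Nat.sInf_mem hne
  exact ⟨S, h1, h2, h3⟩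

lemma chord_unique (D : ChordDiagram n) {c d : Sym2 (Fin (2 * n))}
    (hc : c ∈ D.chords) (hd : d ∈ D.chords) {x : Fin (2 * n)}
    (hxc : x ∈ c) (hxd : x ∈ d) : c = d := by
  obtain ⟨u, _, huniq⟩ := D.cover x
  rw [huniq c ⟨hc, hxc⟩, huniq d ⟨hd, hxd⟩]

lemma sym2_exists_rep {α : Type*} (e : Sym2 α) : ∃ x y, e = s(x, y) :=
  Sym2.inductionOn (f := fun z => ∃ x y, z = s(x, y)) e fun x y => ⟨x, y, rfl⟩

variable {a₁ a₂ b₁ b₂ c₁ c₂ : Fin (2 * n)}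

/-- The key transfer lemma: if `c` or `d` is not a distinguished chord, then
the crossing relation is unchanged by the triple move. -/
lemma transfer (D : ChordDiagram n)
    (hA : Adjacent a₁ a₂) (hB : Adjacent b₁ b₂) (hC : Adjacent c₁ c₂)
    (hdist : [a₁, a₂, b₁, b₂, c₁, c₂].Pairwise (· ≠ ·))
    (h1 : s(a₁, b₁) ∈ D.chords) (h2 : s(a₂, c₁) ∈ D.chords)
    (h3 : s(b₂, c₂) ∈ D.chords)
    {c d : Sym2 (Fin (2 * n))} (hc : c ∈ D.chords) (hd : d ∈ D.chords)
    (hT : (¬ (c = s(a₁, b₁) ∨ c = s(a₂, c₁) ∨ c = s(b₂, c₂))) ∨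
          (¬ (d = s(a₁, b₁) ∨ d = s(a₂, c₁) ∨ d = s(b₂, c₂)))) :
    Crosses c d ↔
      Crosses
        (Sym2.map (Equiv.swap a₁ a₂ * Equiv.swap b₁ b₂ * Equiv.swap c₁ c₂) c)
        (Sym2.map (Equiv.swap a₁ a₂ * Equiv.swap b₁ b₂ * Equiv.swap c₁ c₂) d) := by
  simp only [List.pairwise_cons, List.mem_cons, List.not_mem_nil, or_false,
    List.mem_singleton, List.Pairwise.nil, and_true, forall_eq_or_imp,
    forall_eq] at hdist
  obtain ⟨⟨d12, d13, d14, d15, d16⟩, ⟨d23, d24, d25, d26⟩, ⟨d34, d35, d36⟩,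
    ⟨d45, d46⟩, d56⟩ := hdist
  set σ : Equiv.Perm (Fin (2 * n)) :=
    Equiv.swap a₁ a₂ * Equiv.swap b₁ b₂ * Equiv.swap c₁ c₂ with hσ
  have happ : ∀ t : Fin (2 * n),
      σ t = Equiv.swap a₁ a₂ (Equiv.swap b₁ b₂ (Equiv.swap c₁ c₂ t)) :=
    fun t => rfl
  have hfix : ∀ t : Fin (2 * n), t ≠ a₁ → t ≠ a₂ → t ≠ b₁ → t ≠ b₂ →
      t ≠ c₁ → t ≠ c₂ → σ t = t := by
    intro t t1 t2 t3 t4 t5 t6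
    rw [happ, Equiv.swap_apply_of_ne_of_ne t5 t6,
      Equiv.swap_apply_of_ne_of_ne t3 t4, Equiv.swap_apply_of_ne_of_ne t1 t2]
  have hsa₁ : σ a₁ = a₂ := by
    rw [happ, Equiv.swap_apply_of_ne_of_ne d15 d16,
      Equiv.swap_apply_of_ne_of_ne d13 d14, Equiv.swap_apply_left]
  have hsa₂ : σ a₂ = a₁ := by
    rw [happ, Equiv.swap_apply_of_ne_of_ne d25 d26,
      Equiv.swap_apply_of_ne_of_ne d23 d24, Equiv.swap_apply_right]
  have hsb₁ : σ b₁ = b₂ := by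
    rw [happ, Equiv.swap_apply_of_ne_of_ne d35 d36, Equiv.swap_apply_left,
      Equiv.swap_apply_of_ne_of_ne d14.symm d24.symm]
  have hsb₂ : σ b₂ = b₁ := by
    rw [happ, Equiv.swap_apply_of_ne_of_ne d45 d46, Equiv.swap_apply_right,
      Equiv.swap_apply_of_ne_of_ne d13.symm d23.symm]
  have hsc₁ : σ c₁ = c₂ := by
    rw [happ, Equiv.swap_apply_left,
      Equiv.swap_apply_of_ne_of_ne d36.symm d46.symm,
      Equiv.swap_apply_of_ne_of_ne d16.symm d26.symm]
  have hsc₂ : σ c₂ = c₁ := by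
    rw [happ, Equiv.swap_apply_right,
      Equiv.swap_apply_of_ne_of_ne d35.symm d45.symm,
      Equiv.swap_apply_of_ne_of_ne d15.symm d25.symm]
  -- main one-sided version: `e` not distinguished
  have main : ∀ f ∈ D.chords, ∀ e ∈ D.chords,
      ¬ (e = s(a₁, b₁) ∨ e = s(a₂, c₁) ∨ e = s(b₂, c₂)) →
      (Crosses f e ↔ Crosses (Sym2.map σ f) (Sym2.map σ e)) := by
    intro f hf e he heT
    push_neg at heT
    obtain ⟨he1, he2, he3⟩ := heT
    obtain ⟨x, y, rfl⟩ := sym2_exists_rep e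
    have hxy : x ≠ y := by
      intro hh
      exact D.not_diag _ he (by rw [Sym2.mk_isDiag_iff]; exact hh)
    -- the endpoints of `e` avoid the six distinguished points
    have havoid : ∀ t, t ∈ s(x, y) → t ≠ a₁ ∧ t ≠ a₂ ∧ t ≠ b₁ ∧ t ≠ b₂ ∧
        t ≠ c₁ ∧ t ≠ c₂ := by
      intro t ht
      refine ⟨?_, ?_, ?_, ?_, ?_, ?_⟩ <;> intro hh <;> subst hh
      · exact he1 (chord_unique D he h1 ht (Sym2.mem_mk_left _ _))
      · exact he2 (chord_unique D he h2 ht (Sym2.mem_mk_left _ _))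
      · exact he1 (chord_unique D he h1 ht (Sym2.mem_mk_right _ _))
      · exact he3 (chord_unique D he h3 ht (Sym2.mem_mk_left _ _))
      · exact he2 (chord_unique D he h2 ht (Sym2.mem_mk_right _ _))
      · exact he3 (chord_unique D he h3 ht (Sym2.mem_mk_right _ _))
    obtain ⟨x1, x2, x3, x4, x5, x6⟩ := havoid x (Sym2.mem_mk_left _ _)
    obtain ⟨y1, y2, y3, y4, y5, y6⟩ := havoid y (Sym2.mem_mk_right _ _)
    have hmape : Sym2.map σ s(x, y) = s(x, y) := by
      rw [Sym2.map_pair_eq, hfix x x1 x2 x3 x4 x5 x6, hfix y y1 y2 y3 y4 y5 y6]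
    by_cases hf1 : f = s(a₁, b₁)
    · subst hf1
      rw [hmape, Sym2.map_pair_eq, hsa₁, hsb₁]
      rw [corner hA d13 d23 hxy x1 x2 x3 y1 y2 y3,
        show s(a₂, b₁) = s(b₁, a₂) from Sym2.eq_swap,
        corner hB d23.symm d24.symm hxy x3 x4 x2 y3 y4 y2,
        show s(b₂, a₂) = s(a₂, b₂) from Sym2.eq_swap]
    · by_cases hf2 : f = s(a₂, c₁)
      · subst hf2
        rw [hmape, Sym2.map_pair_eq, hsa₂, hsc₁]
        rw [corner (adjacent_symm hA) d25 d15 hxy x2 x1 x5 y2 y1 y5,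
          show s(a₁, c₁) = s(c₁, a₁) from Sym2.eq_swap,
          corner hC d15.symm d16.symm hxy x5 x6 x1 y5 y6 y1,
          show s(c₂, a₁) = s(a₁, c₂) from Sym2.eq_swap]
      · by_cases hf3 : f = s(b₂, c₂)
        · subst hf3
          rw [hmape, Sym2.map_pair_eq, hsb₂, hsc₂]
          rw [corner (adjacent_symm hB) d46 d36 hxy x4 x3 x6 y4 y3 y6,
            show s(b₁, c₂) = s(c₂, b₁) from Sym2.eq_swap,
            corner (adjacent_symm hC) d36.symm d35.symm hxy x6 x5 x3 y6 y5 y3,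
            show s(c₁, b₁) = s(b₁, c₁) from Sym2.eq_swap]
        · -- f is also fixed
          obtain ⟨u, v, rfl⟩ := sym2_exists_rep f
          have havf : ∀ t, t ∈ s(u, v) → t ≠ a₁ ∧ t ≠ a₂ ∧ t ≠ b₁ ∧ t ≠ b₂ ∧
              t ≠ c₁ ∧ t ≠ c₂ := by
            intro t ht
            refine ⟨?_, ?_, ?_, ?_, ?_, ?_⟩ <;> intro hh <;> subst hh
            · exact hf1 (chord_unique D hf h1 ht (Sym2.mem_mk_left _ _))
            · exact hf2 (chord_unique D hf h2 ht (Sym2.mem_mk_left _ _))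
            · exact hf1 (chord_unique D hf h1 ht (Sym2.mem_mk_right _ _))
            · exact hf3 (chord_unique D hf h3 ht (Sym2.mem_mk_left _ _))
            · exact hf2 (chord_unique D hf h2 ht (Sym2.mem_mk_right _ _))
            · exact hf3 (chord_unique D hf h3 ht (Sym2.mem_mk_right _ _))
          obtain ⟨u1, u2, u3, u4, u5, u6⟩ := havf u (Sym2.mem_mk_left _ _)
          obtain ⟨v1, v2, v3, v4, v5, v6⟩ := havf v (Sym2.mem_mk_right _ _)
          rw [hmape, Sym2.map_pair_eq, hfix u u1 u2 u3 u4 u5 u6,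
            hfix v v1 v2 v3 v4 v5 v6]
  rcases hT with hcT | hdT
  · rw [crosses_comm, crosses_comm (c := Sym2.map σ c)]
    exact main d hd c hc hcT
  · exact main c hc d hd hdT

end Diagram

theorem tr_le_of_strongThirdMove' {n : ℕ} (D D' : ChordDiagram n)
    {a₁ a₂ b₁ b₂ c₁ c₂ : Fin (2 * n)}
    (hA : Adjacent a₁ a₂) (hB : Adjacent b₁ b₂) (hC : Adjacent c₁ c₂)
    (hdist : [a₁, a₂, b₁, b₂, c₁, c₂].Pairwise (· ≠ ·))
    (h1 : s(a₁, b₁) ∈ D.chords) (h2 : s(a₂, c₁) ∈ D.chords)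
    (h3 : s(b₂, c₂) ∈ D.chords)
    (hD' : D'.chords = D.chords.image
      (Sym2.map (Equiv.swap a₁ a₂ * Equiv.swap b₁ b₂ * Equiv.swap c₁ c₂)))
    (hPC : PairwiseCross s(a₁, b₁) s(a₂, c₁) s(b₂, c₂)) :
    tr D' ≤ tr D ∧ tr D ≤ tr D' + 2 := by
  set σ : Equiv.Perm (Fin (2 * n)) :=
    Equiv.swap a₁ a₂ * Equiv.swap b₁ b₂ * Equiv.swap c₁ c₂ with hσ
  have hinj : Function.Injective (Sym2.map σ) := Sym2.map.injective σ.injective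
  obtain ⟨hPC1, hPC2, hPC3⟩ := hPC
  constructor
  · -- tr D' ≤ tr D
    obtain ⟨S, hSsub, hScard, hStriv⟩ := tr_spec D
    have hsub' : S.image (Sym2.map σ) ⊆ D'.chords := by
      rw [hD']; exact Finset.image_subset_image hSsub
    have htriv' : ∀ c ∈ D'.chords \ S.image (Sym2.map σ),
        ∀ d ∈ D'.chords \ S.image (Sym2.map σ), ¬ Crosses c d := by
      intro c hcm d hdm hcross
      rw [Finset.mem_sdiff, hD', Finset.mem_image] at hcm hdm
      obtain ⟨⟨c₀, hc₀D, rfl⟩, hcS⟩ := hcm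
      obtain ⟨⟨d₀, hd₀D, rfl⟩, hdS⟩ := hdm
      have hc₀S : c₀ ∉ S := fun h' => hcS (Finset.mem_image_of_mem _ h')
      have hd₀S : d₀ ∉ S := fun h' => hdS (Finset.mem_image_of_mem _ h')
      by_cases hcd : c₀ = d₀
      · subst hcd; exact crosses_irrefl _ hcross
      by_cases hcT : c₀ = s(a₁, b₁) ∨ c₀ = s(a₂, c₁) ∨ c₀ = s(b₂, c₂)
      · by_cases hdT : d₀ = s(a₁, b₁) ∨ d₀ = s(a₂, c₁) ∨ d₀ = s(b₂, c₂)
        · -- both distinguished: they cross in D, contradicting triviality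
          have hcr : Crosses c₀ d₀ := by
            rcases hcT with rfl | rfl | rfl <;> rcases hdT with h' | h' | h' <;>
              first
                | exact absurd h'.symm hcd
                | (rw [h']; assumption)
                | (rw [h', crosses_comm]; assumption)
          exact hStriv c₀ (Finset.mem_sdiff.mpr ⟨hc₀D, hc₀S⟩)
            d₀ (Finset.mem_sdiff.mpr ⟨hd₀D, hd₀S⟩) hcr
        · have := (transfer D hA hB hC hdist h1 h2 h3 hc₀D hd₀D
            (Or.inr hdT)).mpr hcross
          exact hStriv c₀ (Finset.mem_sdiff.mpr ⟨hc₀D, hc₀S⟩)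
            d₀ (Finset.mem_sdiff.mpr ⟨hd₀D, hd₀S⟩) this
      · have := (transfer D hA hB hC hdist h1 h2 h3 hc₀D hd₀D
          (Or.inl hcT)).mpr hcross
        exact hStriv c₀ (Finset.mem_sdiff.mpr ⟨hc₀D, hc₀S⟩)
          d₀ (Finset.mem_sdiff.mpr ⟨hd₀D, hd₀S⟩) this
    calc tr D' ≤ (S.image (Sym2.map σ)).card := tr_le D' hsub' htriv'
      _ = S.card := Finset.card_image_of_injective S hinj
      _ = tr D := hScard
  · -- tr D ≤ tr D' + 2
    obtain ⟨S', hS'sub, hS'card, hS'triv⟩ := tr_spec D'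
    set S : Finset (Sym2 (Fin (2 * n))) :=
      (D.chords.filter (fun e => Sym2.map σ e ∈ S')) ∪ {s(a₁, b₁), s(a₂, c₁)}
      with hSdef
    have hSsub : S ⊆ D.chords := by
      rw [hSdef]
      refine Finset.union_subset (Finset.filter_subset _ _) ?_
      intro e he
      rcases Finset.mem_insert.mp he with rfl | he
      · exact h1
      · rw [Finset.mem_singleton.mp he]; exact h2
    have hcard : S.card ≤ tr D' + 2 := by
      have hfc : (D.chords.filter (fun e => Sym2.map σ e ∈ S')).card ≤ S'.card := by
        rw [← Finset.card_image_of_injective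
          (D.chords.filter (fun e => Sym2.map σ e ∈ S')) hinj]
        refine Finset.card_le_card ?_
        intro e he
        obtain ⟨e₀, he₀, rfl⟩ := Finset.mem_image.mp he
        exact (Finset.mem_filter.mp he₀).2
      calc S.card ≤ (D.chords.filter (fun e => Sym2.map σ e ∈ S')).card
            + ({s(a₁, b₁), s(a₂, c₁)} : Finset (Sym2 (Fin (2 * n)))).card :=
          Finset.card_union_le _ _
        _ ≤ S'.card + 2 := by
            refine Nat.add_le_add hfc ?_
            refine (Finset.card_insert_le _ _).trans ?_
            simp
        _ = tr D' + 2 := by rw [hS'card]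
    refine le_trans (tr_le D hSsub ?_) hcard
    intro c hcm d hdm hcross
    rw [Finset.mem_sdiff] at hcm hdm
    obtain ⟨hcD, hcS⟩ := hcm
    obtain ⟨hdD, hdS⟩ := hdm
    rw [hSdef, Finset.mem_union, Finset.mem_filter, Finset.mem_insert,
      Finset.mem_singleton] at hcS hdS
    push_neg at hcS hdS
    obtain ⟨hcS', hc1, hc2⟩ := hcS
    obtain ⟨hdS', hd1, hd2⟩ := hdS
    have hcS'' : Sym2.map σ c ∉ S' := fun h' => hcS' hcD h'
    have hdS'' : Sym2.map σ d ∉ S' := fun h' => hdS' hdD h'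
    by_cases hcT : c = s(a₁, b₁) ∨ c = s(a₂, c₁) ∨ c = s(b₂, c₂)
    · by_cases hdT : d = s(a₁, b₁) ∨ d = s(a₂, c₁) ∨ d = s(b₂, c₂)
      · -- then c = d = s(b₂, c₂)
        have hc3 : c = s(b₂, c₂) := by
          rcases hcT with h' | h' | h'
          exacts [absurd h' hc1, absurd h' hc2, h']
        have hd3 : d = s(b₂, c₂) := by
          rcases hdT with h' | h' | h'
          exacts [absurd h' hd1, absurd h' hd2, h']
        rw [hc3, hd3] at hcross
        exact crosses_irrefl _ hcross
      · have hcr := (transfer D hA hB hC hdist h1 h2 h3 hcD hdD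
          (Or.inr hdT)).mp hcross
        refine hS'triv (Sym2.map σ c)
          (Finset.mem_sdiff.mpr ⟨by rw [hD']; exact Finset.mem_image_of_mem _ hcD, hcS''⟩)
          (Sym2.map σ d)
          (Finset.mem_sdiff.mpr ⟨by rw [hD']; exact Finset.mem_image_of_mem _ hdD, hdS''⟩) hcr
    · have hcr := (transfer D hA hB hC hdist h1 h2 h3 hcD hdD
        (Or.inl hcT)).mp hcross
      refine hS'triv (Sym2.map σ c)
        (Finset.mem_sdiff.mpr ⟨by rw [hD']; exact Finset.mem_image_of_mem _ hcD, hcS''⟩)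
        (Sym2.map σ d)
        (Finset.mem_sdiff.mpr ⟨by rw [hD']; exact Finset.mem_image_of_mem _ hdD, hdS''⟩) hcr


/-- inequality in Theorem 1(3): a strong third move whose three
distinguished chords pairwise cross in `D` satisfies `tr D' ≤ tr D ≤ tr D' + 2`. -/
theorem tr_le_of_strongThirdMove {n : ℕ} (D D' : ChordDiagram n)
    (h : ∃ a₁ a₂ b₁ b₂ c₁ c₂, TripleMoveAt D D' a₁ a₂ b₁ b₂ c₁ c₂ ∧
      PairwiseCross s(a₁, b₁) s(a₂, c₁) s(b₂, c₂)) :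
    tr D' ≤ tr D ∧ tr D ≤ tr D' + 2 := by
  obtain ⟨a₁, a₂, b₁, b₂, c₁, c₂, ⟨hA, hB, hC, hdist, h1, h2, h3, hD'⟩, hPC⟩ := h
  exact tr_le_of_strongThirdMove' D D' hA hB hC hdist h1 h2 h3 hD' hPC
end

section
/- Let D be a chord diagram and let D' be obtained from D by a strong third move whose three distinguished chords pairwise cross in D. Then X(D) = X(D') + 3. (Chord-diagram form of Theorem 2(2): a strong third move changes the cross chord number by exactly 3.) -/
open scoped Classical

section Aux

variable {N : ℕ}

lemma crosses_symm {c d : Sym2 (Fin N)} (h : Crosses c d) : Crosses d c := by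
  obtain ⟨a,b,x,y,h1,h2,h3,hc⟩ := h
  exact ⟨a,b,x,y,h1,h2,h3, hc.symm.imp And.symm And.symm⟩

lemma crosses_pat {p q r w : Fin N} (h1 : p < r) (h2 : r < q) (h3 : q < w) :
    Crosses s(p,q) s(r,w) := ⟨p,q,r,w,h1,h2,h3, Or.inl ⟨rfl,rfl⟩⟩

lemma crosses_pat' {p q r w : Fin N} (h1 : p < r) (h2 : r < q) (h3 : q < w) :
    Crosses s(r,w) s(p,q) := ⟨p,q,r,w,h1,h2,h3, Or.inr ⟨rfl,rfl⟩⟩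

lemma crosses_iff' {a b x y : Fin N} :
    Crosses s(a,b) s(x,y) ↔
      ((a.val < x.val ∧ x.val < b.val ∧ b.val < y.val) ∨
       (a.val < y.val ∧ y.val < b.val ∧ b.val < x.val) ∨
       (b.val < x.val ∧ x.val < a.val ∧ a.val < y.val) ∨
       (b.val < y.val ∧ y.val < a.val ∧ a.val < x.val) ∨
       (x.val < a.val ∧ a.val < y.val ∧ y.val < b.val) ∨
       (x.val < b.val ∧ b.val < y.val ∧ y.val < a.val) ∨
       (y.val < a.val ∧ a.val < x.val ∧ x.val < b.val) ∨
       (y.val < b.val ∧ b.val < x.val ∧ x.val < a.val)) := by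
  constructor
  · rintro ⟨p,q,r,w,h1,h2,h3,(⟨h4,h5⟩|⟨h4,h5⟩)⟩ <;>
      rw [Sym2.eq_iff] at h4 h5 <;>
      rcases h4 with ⟨rfl,rfl⟩|⟨rfl,rfl⟩ <;>
      rcases h5 with ⟨rfl,rfl⟩|⟨rfl,rfl⟩ <;>
      simp only [Fin.lt_def] at h1 h2 h3 <;> omega
  · rintro (⟨h1,h2,h3⟩|⟨h1,h2,h3⟩|⟨h1,h2,h3⟩|⟨h1,h2,h3⟩|⟨h1,h2,h3⟩|⟨h1,h2,h3⟩|⟨h1,h2,h3⟩|⟨h1,h2,h3⟩)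
    · exact crosses_pat (Fin.lt_def.mpr h1) (Fin.lt_def.mpr h2) (Fin.lt_def.mpr h3)
    · rw [show s(x,y) = s(y,x) from Sym2.eq_swap]
      exact crosses_pat (Fin.lt_def.mpr h1) (Fin.lt_def.mpr h2) (Fin.lt_def.mpr h3)
    · rw [show s(a,b) = s(b,a) from Sym2.eq_swap]
      exact crosses_pat (Fin.lt_def.mpr h1) (Fin.lt_def.mpr h2) (Fin.lt_def.mpr h3)
    · rw [show s(a,b) = s(b,a) from Sym2.eq_swap, show s(x,y) = s(y,x) from Sym2.eq_swap]
      exact crosses_pat (Fin.lt_def.mpr h1) (Fin.lt_def.mpr h2) (Fin.lt_def.mpr h3)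
    · exact crosses_pat' (Fin.lt_def.mpr h1) (Fin.lt_def.mpr h2) (Fin.lt_def.mpr h3)
    · rw [show s(a,b) = s(b,a) from Sym2.eq_swap]
      exact crosses_pat' (Fin.lt_def.mpr h1) (Fin.lt_def.mpr h2) (Fin.lt_def.mpr h3)
    · rw [show s(x,y) = s(y,x) from Sym2.eq_swap]
      exact crosses_pat' (Fin.lt_def.mpr h1) (Fin.lt_def.mpr h2) (Fin.lt_def.mpr h3)
    · rw [show s(a,b) = s(b,a) from Sym2.eq_swap, show s(x,y) = s(y,x) from Sym2.eq_swap]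
      exact crosses_pat' (Fin.lt_def.mpr h1) (Fin.lt_def.mpr h2) (Fin.lt_def.mpr h3)

lemma adj_symm {p q : Fin N} (h : Adjacent p q) : Adjacent q p := h.symm

lemma adj_val {p q : Fin N} (h : Adjacent p q) :
    p.val + 1 = q.val ∨ (p.val + 1 = N ∧ q.val = 0) ∨
    q.val + 1 = p.val ∨ (q.val + 1 = N ∧ p.val = 0) := by
  have hp := p.isLt; have hq := q.isLt
  rcases h with h | h
  · rcases Nat.lt_or_ge (p.val + 1) N with h' | h'
    · rw [Nat.mod_eq_of_lt h'] at h; omega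
    · have : p.val + 1 = N := by omega
      rw [this, Nat.mod_self] at h; omega
  · rcases Nat.lt_or_ge (q.val + 1) N with h' | h'
    · rw [Nat.mod_eq_of_lt h'] at h; omega
    · have : q.val + 1 = N := by omega
      rw [this, Nat.mod_self] at h; omega

lemma crosses_iff_s6  {a b x y : Fin N} (hab : a ≠ b) (hxy : x ≠ y) :
    Crosses s(a,b) s(x,y) ↔
      ((min a.val b.val < min x.val y.val ∧ min x.val y.val < max a.val b.val ∧
        max a.val b.val < max x.val y.val) ∨
       (min x.val y.val < min a.val b.val ∧ min a.val b.val < max x.val y.val ∧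
        max x.val y.val < max a.val b.val)) := by
  constructor
  · rintro ⟨p,q,r,w,h1,h2,h3,(⟨h4,h5⟩|⟨h4,h5⟩)⟩ <;>
      rw [Sym2.eq_iff] at h4 h5 <;>
      rcases h4 with ⟨rfl,rfl⟩|⟨rfl,rfl⟩ <;>
      rcases h5 with ⟨rfl,rfl⟩|⟨rfl,rfl⟩ <;>
      simp only [Fin.lt_def] at h1 h2 h3 <;> omega
  · intro hC
    have hab' := Fin.val_ne_of_ne hab
    have hxy' := Fin.val_ne_of_ne hxy
    rcases hab.lt_or_gt with h | h <;> rcases hxy.lt_or_gt with h' | h' <;>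
      simp only [Fin.lt_def] at h h'
    · rcases hC with ⟨c1,c2,c3⟩|⟨c1,c2,c3⟩
      · exact crosses_pat (Fin.lt_def.mpr (by omega)) (Fin.lt_def.mpr (by omega)) (Fin.lt_def.mpr (by omega))
      · exact crosses_pat' (Fin.lt_def.mpr (by omega)) (Fin.lt_def.mpr (by omega)) (Fin.lt_def.mpr (by omega))
    · rw [show s(x,y) = s(y,x) from Sym2.eq_swap]
      rcases hC with ⟨c1,c2,c3⟩|⟨c1,c2,c3⟩
      · exact crosses_pat (Fin.lt_def.mpr (by omega)) (Fin.lt_def.mpr (by omega)) (Fin.lt_def.mpr (by omega))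
      · exact crosses_pat' (Fin.lt_def.mpr (by omega)) (Fin.lt_def.mpr (by omega)) (Fin.lt_def.mpr (by omega))
    · rw [show s(a,b) = s(b,a) from Sym2.eq_swap]
      rcases hC with ⟨c1,c2,c3⟩|⟨c1,c2,c3⟩
      · exact crosses_pat (Fin.lt_def.mpr (by omega)) (Fin.lt_def.mpr (by omega)) (Fin.lt_def.mpr (by omega))
      · exact crosses_pat' (Fin.lt_def.mpr (by omega)) (Fin.lt_def.mpr (by omega)) (Fin.lt_def.mpr (by omega))
    · rw [show s(a,b) = s(b,a) from Sym2.eq_swap, show s(x,y) = s(y,x) from Sym2.eq_swap]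
      rcases hC with ⟨c1,c2,c3⟩|⟨c1,c2,c3⟩
      · exact crosses_pat (Fin.lt_def.mpr (by omega)) (Fin.lt_def.mpr (by omega)) (Fin.lt_def.mpr (by omega))
      · exact crosses_pat' (Fin.lt_def.mpr (by omega)) (Fin.lt_def.mpr (by omega)) (Fin.lt_def.mpr (by omega))

lemma move_iff {p p' q q' s t : Fin N}
    (hp : Adjacent p p') (hq : Adjacent q q')
    (h1 : p ≠ q) (h2 : p' ≠ q') (hst : s ≠ t)
    (hsp : s ≠ p) (hsp' : s ≠ p') (hsq : s ≠ q) (hsq' : s ≠ q')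
    (htp : t ≠ p) (htp' : t ≠ p') (htq : t ≠ q) (htq' : t ≠ q') :
    Crosses s(p,q) s(s,t) ↔ Crosses s(p',q') s(s,t) := by
  rw [crosses_iff_s6 h1 hst, crosses_iff_s6 h2 hst]
  have hpv := adj_val hp; have hqv := adj_val hq
  have := p.isLt; have := p'.isLt; have := q.isLt; have := q'.isLt
  have := s.isLt; have := t.isLt
  have := Fin.val_ne_of_ne hsp; have := Fin.val_ne_of_ne hsp'
  have := Fin.val_ne_of_ne hsq; have := Fin.val_ne_of_ne hsq'
  have := Fin.val_ne_of_ne htp; have := Fin.val_ne_of_ne htp'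
  have := Fin.val_ne_of_ne htq; have := Fin.val_ne_of_ne htq'
  omega

set_option maxHeartbeats 4000000 in
lemma strong_kill {a₁ a₂ b₁ b₂ c₁ c₂ : Fin N}
    (hA : Adjacent a₁ a₂) (hB : Adjacent b₁ b₂) (hC : Adjacent c₁ c₂)
    (hx12 : Crosses s(a₁,b₁) s(a₂,c₁)) (hx13 : Crosses s(a₁,b₁) s(b₂,c₂))
    (hx23 : Crosses s(a₂,c₁) s(b₂,c₂)) :
    ¬ Crosses s(a₂,b₂) s(a₁,c₂) ∧ ¬ Crosses s(a₂,b₂) s(b₁,c₁) ∧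
    ¬ Crosses s(a₁,c₂) s(b₁,c₁) := by
  rw [crosses_iff'] at hx12 hx13 hx23
  rw [crosses_iff', crosses_iff', crosses_iff']
  have hAv := adj_val hA; have hBv := adj_val hB; have hCv := adj_val hC
  have := a₁.isLt; have := a₂.isLt; have := b₁.isLt; have := b₂.isLt
  have := c₁.isLt; have := c₂.isLt
  refine ⟨?_, ?_, ?_⟩ <;> omega

lemma even_card_invol {α : Type*} [DecidableEq α] (T : Finset α) (i : α → α)
    (hmem : ∀ x ∈ T, i x ∈ T) (hinv : ∀ x ∈ T, i (i x) = x)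
    (hne : ∀ x ∈ T, i x ≠ x) : Even T.card := by
  induction T using Finset.strongInduction with
  | _ T ih =>
    rcases T.eq_empty_or_nonempty with rfl | ⟨x, hx⟩
    · simp
    · have hix : i x ∈ T := hmem x hx
      have hxne : i x ≠ x := hne x hx
      set T' := (T.erase x).erase (i x) with hT'
      have hsub : T' ⊂ T := by
        refine Finset.ssubset_of_subset_of_ssubset ?_ (Finset.erase_ssubset hx)
        exact Finset.erase_subset _ _
      have hmem' : ∀ y ∈ T', y ∈ T ∧ y ≠ x ∧ y ≠ i x := by
        intro y hy
        simp only [hT', Finset.mem_erase] at hy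
        exact ⟨hy.2.2, hy.2.1, hy.1⟩
      have hcard : T.card = T'.card + 2 := by
        have h1 : i x ∈ T.erase x := Finset.mem_erase.mpr ⟨hxne, hix⟩
        have h2 := Finset.card_erase_of_mem h1
        have h3 := Finset.card_erase_of_mem hx
        have h4 := Finset.card_pos.mpr ⟨x, hx⟩
        have h5 := Finset.card_pos.mpr ⟨i x, h1⟩
        rw [hT', h2, h3]
        omega
      have hEven : Even T'.card := by
        refine ih T' hsub ?_ ?_ ?_
        · intro y hy
          obtain ⟨hyT, hyx, hyix⟩ := hmem' y hy
          simp only [hT', Finset.mem_erase]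
          refine ⟨?_, ?_, hmem y hyT⟩
          · intro h; exact hyx (by rw [← hinv y hyT, h, hinv x hx])
          · intro h; exact hyix (by rw [← hinv y hyT, h])
        · intro y hy; exact hinv y (hmem' y hy).1
        · intro y hy; exact hne y (hmem' y hy).1
      obtain ⟨k, hk⟩ := hEven
      exact ⟨k + 1, by omega⟩

end Aux

set_option maxHeartbeats 4000000 in
/-- Theorem 2(2): a strong third move whose three distinguished
chords pairwise cross in `D` decreases the cross chord number by exactly `3`. -/
theorem Xnum_eq_add_three_of_strongThirdMove {n : ℕ} (D D' : ChordDiagram n)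
    (h : ∃ a₁ a₂ b₁ b₂ c₁ c₂, TripleMoveAt D D' a₁ a₂ b₁ b₂ c₁ c₂ ∧
      PairwiseCross s(a₁, b₁) s(a₂, c₁) s(b₂, c₂)) :
    Xnum D = Xnum D' + 3 := by
  classical
  obtain ⟨a₁,a₂,b₁,b₂,c₁,c₂,⟨hA,hB,hC,hne,hm1,hm2,hm3,hD'⟩,⟨hx12,hx13,hx23⟩⟩ := h
  -- distinctness of the six points
  simp only [List.pairwise_cons, List.mem_cons, List.mem_singleton,
    List.not_mem_nil] at hne
  obtain ⟨ha, hb, hc, hd, he, -⟩ := hne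
  have d1 : a₁ ≠ a₂ := ha a₂ (Or.inl rfl)
  have d2 : a₁ ≠ b₁ := ha b₁ (Or.inr (Or.inl rfl))
  have d3 : a₁ ≠ b₂ := ha b₂ (Or.inr (Or.inr (Or.inl rfl)))
  have d4 : a₁ ≠ c₁ := ha c₁ (Or.inr (Or.inr (Or.inr (Or.inl rfl))))
  have d5 : a₁ ≠ c₂ := ha c₂ (Or.inr (Or.inr (Or.inr (Or.inr (Or.inl rfl)))))
  have d6 : a₂ ≠ b₁ := hb b₁ (Or.inl rfl)
  have d7 : a₂ ≠ b₂ := hb b₂ (Or.inr (Or.inl rfl))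
  have d8 : a₂ ≠ c₁ := hb c₁ (Or.inr (Or.inr (Or.inl rfl)))
  have d9 : a₂ ≠ c₂ := hb c₂ (Or.inr (Or.inr (Or.inr (Or.inl rfl))))
  have d10 : b₁ ≠ b₂ := hc b₂ (Or.inl rfl)
  have d11 : b₁ ≠ c₁ := hc c₁ (Or.inr (Or.inl rfl))
  have d12 : b₁ ≠ c₂ := hc c₂ (Or.inr (Or.inr (Or.inl rfl)))
  have d13 : b₂ ≠ c₁ := hd c₁ (Or.inl rfl)
  have d14 : b₂ ≠ c₂ := hd c₂ (Or.inr (Or.inl rfl))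
  have d15 : c₁ ≠ c₂ := he c₂ (Or.inl rfl)
  set σ : Equiv.Perm (Fin (2*n)) :=
    Equiv.swap a₁ a₂ * Equiv.swap b₁ b₂ * Equiv.swap c₁ c₂ with hσ
  have sa₁ : σ a₁ = a₂ := by
    rw [hσ, Equiv.Perm.mul_apply, Equiv.Perm.mul_apply,
      Equiv.swap_apply_of_ne_of_ne d4 d5, Equiv.swap_apply_of_ne_of_ne d2 d3,
      Equiv.swap_apply_left]
  have sa₂ : σ a₂ = a₁ := by
    rw [hσ, Equiv.Perm.mul_apply, Equiv.Perm.mul_apply,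
      Equiv.swap_apply_of_ne_of_ne d8 d9, Equiv.swap_apply_of_ne_of_ne d6 d7,
      Equiv.swap_apply_right]
  have sb₁ : σ b₁ = b₂ := by
    rw [hσ, Equiv.Perm.mul_apply, Equiv.Perm.mul_apply,
      Equiv.swap_apply_of_ne_of_ne d11 d12, Equiv.swap_apply_left,
      Equiv.swap_apply_of_ne_of_ne d3.symm d7.symm]
  have sb₂ : σ b₂ = b₁ := by
    rw [hσ, Equiv.Perm.mul_apply, Equiv.Perm.mul_apply,
      Equiv.swap_apply_of_ne_of_ne d13 d14, Equiv.swap_apply_right,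
      Equiv.swap_apply_of_ne_of_ne d2.symm d6.symm]
  have sc₁ : σ c₁ = c₂ := by
    rw [hσ, Equiv.Perm.mul_apply, Equiv.Perm.mul_apply, Equiv.swap_apply_left,
      Equiv.swap_apply_of_ne_of_ne d12.symm d14.symm,
      Equiv.swap_apply_of_ne_of_ne d5.symm d9.symm]
  have sc₂ : σ c₂ = c₁ := by
    rw [hσ, Equiv.Perm.mul_apply, Equiv.Perm.mul_apply, Equiv.swap_apply_right,
      Equiv.swap_apply_of_ne_of_ne d11.symm d13.symm,
      Equiv.swap_apply_of_ne_of_ne d4.symm d8.symm]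
  have sfix : ∀ x : Fin (2*n), x ≠ a₁ → x ≠ a₂ → x ≠ b₁ → x ≠ b₂ → x ≠ c₁ → x ≠ c₂ →
      σ x = x := by
    intro x k1 k2 k3 k4 k5 k6
    rw [hσ, Equiv.Perm.mul_apply, Equiv.Perm.mul_apply,
      Equiv.swap_apply_of_ne_of_ne k5 k6, Equiv.swap_apply_of_ne_of_ne k3 k4,
      Equiv.swap_apply_of_ne_of_ne k1 k2]
  have sinv : ∀ x, σ (σ x) = x := by
    intro x
    by_cases k1 : x = a₁; · rw [k1, sa₁, sa₂]
    by_cases k2 : x = a₂; · rw [k2, sa₂, sa₁]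
    by_cases k3 : x = b₁; · rw [k3, sb₁, sb₂]
    by_cases k4 : x = b₂; · rw [k4, sb₂, sb₁]
    by_cases k5 : x = c₁; · rw [k5, sc₁, sc₂]
    by_cases k6 : x = c₂; · rw [k6, sc₂, sc₁]
    rw [sfix x k1 k2 k3 k4 k5 k6, sfix x k1 k2 k3 k4 k5 k6]
  set φ : Sym2 (Fin (2*n)) → Sym2 (Fin (2*n)) := Sym2.map σ with hφ
  have φinv : ∀ e, φ (φ e) = e := by
    intro e
    rw [hφ, Sym2.map_map]
    induction e using Sym2.ind with
    | _ u v => rw [Sym2.map_pair_eq]; simp only [Function.comp_apply, sinv]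
  have φinj : Function.Injective φ := Function.Involutive.injective φinv
  -- notation for the three distinguished chords
  have hφ1 : φ s(a₁,b₁) = s(a₂,b₂) := by rw [hφ, Sym2.map_pair_eq, sa₁, sb₁]
  have hφ2 : φ s(a₂,c₁) = s(a₁,c₂) := by rw [hφ, Sym2.map_pair_eq, sa₂, sc₁]
  have hφ3 : φ s(b₂,c₂) = s(b₁,c₁) := by rw [hφ, Sym2.map_pair_eq, sb₂, sc₂]
  -- images do not cross
  obtain ⟨nc1, nc2, nc3⟩ := strong_kill hA hB hC hx12 hx13 hx23
  -- distinctness of the chords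
  have n12 : s(a₁,b₁) ≠ s(a₂,c₁) := by
    intro h'; rw [Sym2.eq_iff] at h'
    rcases h' with ⟨h',-⟩|⟨h',-⟩; exacts [d1 h', d4 h']
  have n13 : s(a₁,b₁) ≠ s(b₂,c₂) := by
    intro h'; rw [Sym2.eq_iff] at h'
    rcases h' with ⟨h',-⟩|⟨h',-⟩; exacts [d3 h', d5 h']
  have n23 : s(a₂,c₁) ≠ s(b₂,c₂) := by
    intro h'; rw [Sym2.eq_iff] at h'
    rcases h' with ⟨h',-⟩|⟨h',-⟩; exacts [d7 h', d9 h']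
  -- chords are pairwise disjoint
  have mem_unique : ∀ {c d : Sym2 (Fin (2*n))}, c ∈ D.chords → d ∈ D.chords →
      ∀ {x}, x ∈ c → x ∈ d → c = d := by
    intro c d hcm hdm x hxc hxd
    obtain ⟨c₀, -, hu⟩ := D.cover x
    rw [hu c ⟨hcm, hxc⟩, hu d ⟨hdm, hxd⟩]
  -- non-distinguished chords avoid the six points
  have hnot : ∀ e ∈ D.chords, e ≠ s(a₁,b₁) → e ≠ s(a₂,c₁) → e ≠ s(b₂,c₂) →
      a₁ ∉ e ∧ a₂ ∉ e ∧ b₁ ∉ e ∧ b₂ ∉ e ∧ c₁ ∉ e ∧ c₂ ∉ e := by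
    intro e hem k1 k2 k3
    refine ⟨?_, ?_, ?_, ?_, ?_, ?_⟩ <;> intro hx
    · exact k1 (mem_unique hem hm1 hx (Sym2.mem_mk_left a₁ b₁))
    · exact k2 (mem_unique hem hm2 hx (Sym2.mem_mk_left a₂ c₁))
    · exact k1 (mem_unique hem hm1 hx (Sym2.mem_mk_right a₁ b₁))
    · exact k3 (mem_unique hem hm3 hx (Sym2.mem_mk_left b₂ c₂))
    · exact k2 (mem_unique hem hm2 hx (Sym2.mem_mk_right a₂ c₁))
    · exact k3 (mem_unique hem hm3 hx (Sym2.mem_mk_right b₂ c₂))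
  have hfix : ∀ e ∈ D.chords, e ≠ s(a₁,b₁) → e ≠ s(a₂,c₁) → e ≠ s(b₂,c₂) →
      φ e = e := by
    intro e hem k1 k2 k3
    obtain ⟨q1, q2, q3, q4, q5, q6⟩ := hnot e hem k1 k2 k3
    obtain ⟨⟨u, v⟩, rfl⟩ := e.exists_rep
    simp only [Sym2.mem_iff, not_or] at q1 q2 q3 q4 q5 q6
    have : φ s(u,v) = s(u,v) := by
      rw [hφ, Sym2.map_pair_eq,
        sfix u (Ne.symm q1.1) (Ne.symm q2.1) (Ne.symm q3.1) (Ne.symm q4.1)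
          (Ne.symm q5.1) (Ne.symm q6.1),
        sfix v (Ne.symm q1.2) (Ne.symm q2.2) (Ne.symm q3.2) (Ne.symm q4.2)
          (Ne.symm q5.2) (Ne.symm q6.2)]
    exact this
  -- key invariance of crossing
  have oneSide : ∀ c, (c = s(a₁,b₁) ∨ c = s(a₂,c₁) ∨ c = s(b₂,c₂)) →
      ∀ d ∈ D.chords, d ≠ s(a₁,b₁) → d ≠ s(a₂,c₁) → d ≠ s(b₂,c₂) →
      (Crosses c d ↔ Crosses (φ c) (φ d)) := by
    intro c hc3 d hdm k1 k2 k3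
    rw [hfix d hdm k1 k2 k3]
    obtain ⟨q1, q2, q3, q4, q5, q6⟩ := hnot d hdm k1 k2 k3
    have hdiag := D.not_diag d hdm
    obtain ⟨⟨u, v⟩, rfl⟩ := d.exists_rep
    have huv : u ≠ v := fun h' => hdiag (Sym2.mk_isDiag_iff.mpr h')
    simp only [Sym2.mem_iff, not_or] at q1 q2 q3 q4 q5 q6
    rcases hc3 with rfl | rfl | rfl
    · rw [hφ1]
      exact move_iff hA hB d2 d7 huv (Ne.symm q1.1) (Ne.symm q2.1) (Ne.symm q3.1)
        (Ne.symm q4.1) (Ne.symm q1.2) (Ne.symm q2.2) (Ne.symm q3.2) (Ne.symm q4.2)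
    · rw [hφ2]
      exact move_iff (adj_symm hA) hC d8 d5 huv (Ne.symm q2.1) (Ne.symm q1.1) (Ne.symm q5.1)
        (Ne.symm q6.1) (Ne.symm q2.2) (Ne.symm q1.2) (Ne.symm q5.2) (Ne.symm q6.2)
    · rw [hφ3]
      exact move_iff (adj_symm hB) (adj_symm hC) d14 d11 huv (Ne.symm q4.1) (Ne.symm q3.1)
        (Ne.symm q6.1) (Ne.symm q5.1) (Ne.symm q4.2) (Ne.symm q3.2) (Ne.symm q6.2)
        (Ne.symm q5.2)
  have KI : ∀ c ∈ D.chords, ∀ d ∈ D.chords,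
      ¬((c = s(a₁,b₁) ∨ c = s(a₂,c₁) ∨ c = s(b₂,c₂)) ∧
        (d = s(a₁,b₁) ∨ d = s(a₂,c₁) ∨ d = s(b₂,c₂)) ∧ c ≠ d) →
      (Crosses c d ↔ Crosses (φ c) (φ d)) := by
    intro c hcm d hdm hnd
    by_cases hcd : c = d
    · subst hcd; exact iff_of_false (crosses_irrefl c) (crosses_irrefl (φ c))
    by_cases hc3 : c = s(a₁,b₁) ∨ c = s(a₂,c₁) ∨ c = s(b₂,c₂)
    · have hd3 : ¬(d = s(a₁,b₁) ∨ d = s(a₂,c₁) ∨ d = s(b₂,c₂)) := by tauto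
      push_neg at hd3
      exact oneSide c hc3 d hdm hd3.1 hd3.2.1 hd3.2.2
    · by_cases hd3 : d = s(a₁,b₁) ∨ d = s(a₂,c₁) ∨ d = s(b₂,c₂)
      · push_neg at hc3
        have h' := oneSide d hd3 c hcm hc3.1 hc3.2.1 hc3.2.2
        exact ⟨fun hx => crosses_symm (h'.mp (crosses_symm hx)),
               fun hx => crosses_symm (h'.mpr (crosses_symm hx))⟩
      · push_neg at hc3 hd3
        rw [hfix c hcm hc3.1 hc3.2.1 hc3.2.2, hfix d hdm hd3.1 hd3.2.1 hd3.2.2]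
  -- the sets of crossing pairs
  set S := (D.chords ×ˢ D.chords).filter (fun p => Crosses p.1 p.2) with hS
  set S' := (D'.chords ×ˢ D'.chords).filter (fun p => Crosses p.1 p.2) with hS'
  set Dis : Sym2 (Fin (2*n)) × Sym2 (Fin (2*n)) → Prop := fun p =>
    (p.1 = s(a₁,b₁) ∨ p.1 = s(a₂,c₁) ∨ p.1 = s(b₂,c₂)) ∧
    (p.2 = s(a₁,b₁) ∨ p.2 = s(a₂,c₁) ∨ p.2 = s(b₂,c₂)) ∧ p.1 ≠ p.2 with hDis
  have hsplit : (S.filter Dis).card + (S.filter (fun p => ¬ Dis p)).card = S.card :=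
    Finset.card_filter_add_card_filter_not _
  -- the distinguished block has six ordered pairs
  have hcard6 : (S.filter Dis).card = 6 := by
    have hset : S.filter Dis =
        {(s(a₁,b₁),s(a₂,c₁)), (s(a₁,b₁),s(b₂,c₂)), (s(a₂,c₁),s(a₁,b₁)),
         (s(a₂,c₁),s(b₂,c₂)), (s(b₂,c₂),s(a₁,b₁)), (s(b₂,c₂),s(a₂,c₁))} := by
      ext p
      simp only [Finset.mem_filter, hS, Finset.mem_product, Finset.mem_insert,
        Finset.mem_singleton, hDis]
      constructor
      · rintro ⟨⟨-, -⟩, ⟨hp1, hp2, hpne⟩⟩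
        rcases p with ⟨u, v⟩
        simp only [Prod.mk.injEq]
        simp only at hp1 hp2 hpne
        rcases hp1 with rfl | rfl | rfl <;> rcases hp2 with rfl | rfl | rfl
        · exact absurd rfl hpne
        · exact Or.inl ⟨rfl, rfl⟩
        · exact Or.inr (Or.inl ⟨rfl, rfl⟩)
        · exact Or.inr (Or.inr (Or.inl ⟨rfl, rfl⟩))
        · exact absurd rfl hpne
        · exact Or.inr (Or.inr (Or.inr (Or.inl ⟨rfl, rfl⟩)))
        · exact Or.inr (Or.inr (Or.inr (Or.inr (Or.inl ⟨rfl, rfl⟩))))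
        · exact Or.inr (Or.inr (Or.inr (Or.inr (Or.inr ⟨rfl, rfl⟩))))
        · exact absurd rfl hpne
      · rintro (rfl | rfl | rfl | rfl | rfl | rfl)
        · exact ⟨⟨⟨hm1, hm2⟩, hx12⟩, Or.inl rfl, Or.inr (Or.inl rfl), n12⟩
        · exact ⟨⟨⟨hm1, hm3⟩, hx13⟩, Or.inl rfl, Or.inr (Or.inr rfl), n13⟩
        · exact ⟨⟨⟨hm2, hm1⟩, crosses_symm hx12⟩, Or.inr (Or.inl rfl), Or.inl rfl, n12.symm⟩
        · exact ⟨⟨⟨hm2, hm3⟩, hx23⟩, Or.inr (Or.inl rfl), Or.inr (Or.inr rfl), n23⟩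
        · exact ⟨⟨⟨hm3, hm1⟩, crosses_symm hx13⟩, Or.inr (Or.inr rfl), Or.inl rfl, n13.symm⟩
        · exact ⟨⟨⟨hm3, hm2⟩, crosses_symm hx23⟩, Or.inr (Or.inr rfl), Or.inr (Or.inl rfl), n23.symm⟩
    have n21 := n12.symm
    have n31 := n13.symm
    have n32 := n23.symm
    rw [hset]
    rw [Finset.card_insert_of_notMem (by
        simp [Prod.mk.injEq, n12, n13, n23, n21, n31, n32]),
      Finset.card_insert_of_notMem (by
        simp [Prod.mk.injEq, n12, n13, n23, n21, n31, n32]),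
      Finset.card_insert_of_notMem (by
        simp [Prod.mk.injEq, n12, n13, n23, n21, n31, n32]),
      Finset.card_insert_of_notMem (by
        simp [Prod.mk.injEq, n12, n13, n23, n21, n31, n32]),
      Finset.card_insert_of_notMem (by
        simp [Prod.mk.injEq, n12, n13, n23, n21, n31, n32]),
      Finset.card_singleton]
  -- the rest of the crossing pairs are in bijection with those of D'
  have himg : ∀ e ∈ D.chords, φ e ∈ D'.chords := by
    intro e hem
    rw [hD', Finset.mem_image]
    exact ⟨e, hem, rfl⟩
  have himg' : ∀ e ∈ D'.chords, φ e ∈ D.chords := by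
    intro e hem
    rw [hD', Finset.mem_image] at hem
    obtain ⟨u, hu, rfl⟩ := hem
    rw [φinv]; exact hu
  have hnoDis : ∀ u : Sym2 (Fin (2*n)) × Sym2 (Fin (2*n)), (u.1 = s(a₁,b₁) ∨ u.1 = s(a₂,c₁) ∨ u.1 = s(b₂,c₂)) →
      (u.2 = s(a₁,b₁) ∨ u.2 = s(a₂,c₁) ∨ u.2 = s(b₂,c₂)) → u.1 ≠ u.2 →
      ¬ Crosses (φ u.1) (φ u.2) := by
    rintro ⟨u, v⟩ hu hv huv
    simp only at hu hv huv ⊢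
    rcases hu with rfl | rfl | rfl <;> rcases hv with rfl | rfl | rfl
    · exact absurd rfl huv
    · rw [hφ1, hφ2]; exact nc1
    · rw [hφ1, hφ3]; exact nc2
    · rw [hφ2, hφ1]; exact fun hx => nc1 (crosses_symm hx)
    · exact absurd rfl huv
    · rw [hφ2, hφ3]; exact nc3
    · rw [hφ3, hφ1]; exact fun hx => nc2 (crosses_symm hx)
    · rw [hφ3, hφ2]; exact fun hx => nc3 (crosses_symm hx)
    · exact absurd rfl huv
  have hbij : (S.filter (fun p => ¬ Dis p)).card = S'.card := by
    refine Finset.card_bij' (fun p _ => (φ p.1, φ p.2)) (fun p _ => (φ p.1, φ p.2))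
      ?_ ?_ ?_ ?_
    · intro p hp
      simp only [Finset.mem_filter, hS, Finset.mem_product] at hp
      obtain ⟨⟨⟨hp1, hp2⟩, hpc⟩, hpd⟩ := hp
      simp only [Finset.mem_filter, hS', Finset.mem_product]
      exact ⟨⟨himg _ hp1, himg _ hp2⟩, (KI p.1 hp1 p.2 hp2 hpd).mp hpc⟩
    · intro p hp
      simp only [Finset.mem_filter, hS', Finset.mem_product] at hp
      obtain ⟨⟨hp1, hp2⟩, hpc⟩ := hp
      have hq1 : φ p.1 ∈ D.chords := himg' _ hp1
      have hq2 : φ p.2 ∈ D.chords := himg' _ hp2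
      have hnd : ¬ Dis (φ p.1, φ p.2) := by
        simp only [hDis]
        rintro ⟨hu, hv, huv⟩
        have := hnoDis (φ p.1, φ p.2) hu hv huv
        simp only [φinv] at this
        exact this hpc
      simp only [Finset.mem_filter, hS, Finset.mem_product]
      refine ⟨⟨⟨hq1, hq2⟩, ?_⟩, hnd⟩
      have := (KI (φ p.1) hq1 (φ p.2) hq2 (by simpa [hDis] using hnd)).mpr
      simp only [φinv] at this
      exact this hpc
    · intro p hp; simp only [φinv]
    · intro p hp; simp only [φinv]
  -- S' has even cardinality
  have heven : Even S'.card := by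
    refine even_card_invol S' Prod.swap ?_ ?_ ?_
    · intro p hp
      simp only [Finset.mem_filter, hS', Finset.mem_product] at hp ⊢
      exact ⟨⟨hp.1.2, hp.1.1⟩, crosses_symm hp.2⟩
    · intro p _; exact Prod.swap_swap p
    · intro p hp h'
      simp only [Finset.mem_filter, hS', Finset.mem_product] at hp
      have : p.1 = p.2 := by
        have := congrArg Prod.fst h'
        simpa using this.symm
      rw [this] at hp
      exact crosses_irrefl _ hp.2
  have hXD : Xnum D = S.card / 2 := rfl
  have hXD' : Xnum D' = S'.card / 2 := rfl
  obtain ⟨k, hk⟩ := heven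
  rw [hXD, hXD']
  omega
end
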